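/- arXiv:1205.1758 — 3 statements merged into one kernel-verified Lean document; each statement's English description precedes it below -/
import Mathlib

section
/- For every k ∈ ℕ and γ ∈ (0,1], there exists a univariate real polynomial g of degree O(√k · log(1/γ)) such that g(0) = 0 and |g(x) − 1| ≤ γ for every x ∈ {1, 2, …, k}. -/
/-!
Take `g x = 1 - T_d(q x) / T_d(q 0)` with `T_d` the Chebyshev polynomial and `q` an affine map
sending `1, …, k` into `[-1, 1]` and `0` to `cosh t`. Then `g 0 = 0` and `|g x - 1| ≤ 1 / cosh (d t)`
on `1, …, k`, because `|T_d| ≤ 1` on `[-1, 1]` while `T_d (cosh t) = cosh (d t)`. Fitting `k` points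
into `[-1, 1]` only needs `cosh t - 1 ≲ 1 / k`, so `t = 1 / √k` works, and `cosh (d t) ≥ 2 / γ` as
soon as `d ≈ √k · log (2 / γ)`.
-/

open Polynomial Polynomial.Chebyshev Real

/-- `q x = cosh t - (cosh t - 1) x` sends `0` to `cosh t` and `[1, 1 + 2 / (cosh t - 1)]` onto
`[-1, 1]`. -/
noncomputable def orApprox (d : ℕ) (t : ℝ) : ℝ[X] :=
  1 - C (cosh (d * t))⁻¹ * (T ℝ d).comp (C (cosh t) - C (cosh t - 1) * X)

namespace orApprox

variable (d : ℕ) (t : ℝ)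

theorem natDegree_le : (orApprox d t).natDegree ≤ d := by
  have hq : (C (cosh t) - C (cosh t - 1) * X).natDegree ≤ 1 := by
    refine (natDegree_sub_le _ _).trans (max_le (by simp) ?_)
    exact (natDegree_C_mul_le _ _).trans natDegree_X_le
  refine (natDegree_sub_le _ _).trans (max_le (by simp) ?_)
  refine (natDegree_C_mul_le _ _).trans (natDegree_comp_le.trans ?_)
  simpa [natDegree_T] using Nat.mul_le_mul_left (T ℝ d).natDegree hq

theorem eval_zero : (orApprox d t).eval 0 = 0 := by
  simp [orApprox, T_real_cosh, (cosh_pos _).ne']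

theorem abs_eval_sub_one_le {x : ℝ} (hx₁ : 1 ≤ x) (hx₂ : (cosh t - 1) * (x - 1) ≤ 2) :
    |(orApprox d t).eval x - 1| ≤ (cosh (d * t))⁻¹ := by
  have hq : |cosh t - (cosh t - 1) * x| ≤ 1 := by
    have : 0 ≤ (cosh t - 1) * (x - 1) :=
      mul_nonneg (sub_nonneg.2 (one_le_cosh t)) (sub_nonneg.2 hx₁)
    rw [abs_le]; constructor <;> nlinarith
  have hT := abs_eval_T_real_le_one d hq
  simp only [orApprox, eval_sub, eval_one, eval_mul, eval_C, eval_comp, eval_X,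
    sub_sub_cancel_left, abs_neg, abs_mul, abs_inv, abs_of_pos (cosh_pos _)]
  exact mul_le_of_le_one_right (inv_pos.2 (cosh_pos _)).le hT

end orApprox

theorem inv_cosh_le_two_mul_exp_neg (x : ℝ) : (cosh x)⁻¹ ≤ 2 * exp (-x) := by
  have h : exp (-x) * exp x = 1 := by rw [← exp_add, neg_add_cancel, exp_zero]
  rw [inv_le_iff_one_le_mul₀ (cosh_pos x), cosh_eq]
  nlinarith [exp_pos (-x)]

theorem cosh_sub_one_le_sq {t : ℝ} (ht : t ^ 2 ≤ 2) : cosh t - 1 ≤ t ^ 2 := by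
  have hx : |t ^ 2 / 2| = t ^ 2 / 2 := abs_of_nonneg (by positivity)
  have h := (abs_le.1 (abs_exp_sub_one_le (x := t ^ 2 / 2) (by linarith))).2
  linarith [cosh_le_exp_half_sq t]

theorem two_mul_exp_neg_le {γ s : ℝ} (hγ : 0 < γ) (hs : log (2 / γ) ≤ s) : 2 * exp (-s) ≤ γ := by
  calc 2 * exp (-s) ≤ 2 * exp (-log (2 / γ)) := by gcongr
    _ = γ := by rw [exp_neg, exp_log (by positivity)]; field_simp

theorem natCeil_sqrt_mul_log_le {k : ℕ} (hk : 1 ≤ k) {γ : ℝ} (hγ : 0 < γ) (hγ₂ : γ ≤ 1 / 2) :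
    (⌈√k * log (2 / γ)⌉₊ : ℝ) ≤ 4 * √k * log (1 / γ) := by
  have hsqrt : 1 ≤ √(k : ℝ) := one_le_sqrt.2 (by exact_mod_cast hk)
  have hlog2 : log 2 ≤ log (1 / γ) := log_le_log two_pos (by rw [le_div_iff₀ hγ]; linarith)
  have hsplit : log (2 / γ) = log 2 + log (1 / γ) := by
    rw [← log_mul two_ne_zero (by positivity), mul_one_div]
  have hlog2_pos := log_pos one_lt_two
  have hceil := Nat.ceil_lt_add_one (a := √k * log (2 / γ))
    (mul_nonneg (sqrt_nonneg _) (by linarith))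
  nlinarith [log_two_gt_d9]

/-- Chebyshev approximation of OR: there is a constant `C` such that for every `k ≥ 1` and
`γ ∈ (0, 1/2]` there is a univariate real polynomial `g` of degree at most
`C·√k·log(1/γ)` with `g(0) = 0` and `|g(x) - 1| ≤ γ` for all `x ∈ {1,…,k}`. -/
theorem chebyshev_or_approx :
    ∃ C : ℝ, 0 < C ∧
      ∀ k : ℕ, 1 ≤ k → ∀ γ : ℝ, 0 < γ → γ ≤ 1 / 2 →
        ∃ g : Polynomial ℝ,
          (g.natDegree : ℝ) ≤ C * Real.sqrt k * Real.log (1 / γ) ∧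
          g.eval 0 = 0 ∧
          ∀ x : ℕ, 1 ≤ x → x ≤ k → |g.eval (x : ℝ) - 1| ≤ γ := by
  refine ⟨4, four_pos, fun k hk γ hγ hγ₂ => ?_⟩
  set d := ⌈√k * log (2 / γ)⌉₊
  set t := (√k)⁻¹
  have hk₀ : (0 : ℝ) < k := by exact_mod_cast hk
  have ht : t ^ 2 = (k : ℝ)⁻¹ := by rw [inv_pow, sq_sqrt hk₀.le]
  have hdt : log (2 / γ) ≤ d * t := by
    rw [← div_eq_mul_inv, le_div_iff₀ (sqrt_pos.2 hk₀), mul_comm]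
    exact Nat.le_ceil _
  refine ⟨orApprox d t, ?_, orApprox.eval_zero d t, fun x hx₁ hxk => ?_⟩
  · exact (Nat.cast_le.2 (orApprox.natDegree_le d t)).trans (natCeil_sqrt_mul_log_le hk hγ hγ₂)
  · have ht₂ : t ^ 2 ≤ 2 := by
      rw [ht]; exact (inv_le_one_of_one_le₀ (by exact_mod_cast hk)).trans one_le_two
    have hcosh : cosh t - 1 ≤ (k : ℝ)⁻¹ := ht ▸ cosh_sub_one_le_sq ht₂
    have hx : (cosh t - 1) * (x - 1) ≤ 2 := calc
      (cosh t - 1) * (x - 1) ≤ (k : ℝ)⁻¹ * (x - 1) :=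
        mul_le_mul_of_nonneg_right hcosh (by simpa using hx₁)
      _ ≤ 2 := by rw [inv_mul_le_iff₀ hk₀]; linarith [(Nat.cast_le (α := ℝ)).2 hxk]
    calc |(orApprox d t).eval (x : ℝ) - 1| ≤ (cosh (d * t))⁻¹ :=
          orApprox.abs_eval_sub_one_le d t (by exact_mod_cast hx₁) hx
      _ ≤ 2 * exp (-(d * t)) := inv_cosh_le_two_mul_exp_neg _
      _ ≤ γ := two_mul_exp_neg_le hγ hdt
end

section
/- Let h : ℝ → ℝ be a polynomial with h(k) = 1 and |h(s)| ≤ γ/k for all s ∈ {0,1,…,k−1}, where k ≥ 1. Let f be the length-k decision list with branch variables y₁,…,y_k and outputs b₁,…,b_{k+1} ∈ {0,1}. Then the polynomial p(y) = ∑_{i=1}^{k} b_i · h((1−y₁)+⋯+(1−y_{i−1}) + y_i + (k−i)) + b_{k+1} · h((1−y₁)+⋯+(1−y_k)) satisfies |p(y) − f(y)| ≤ γ for every y ∈ {0,1}^m. -/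
/-!
The argument of `h` in the `i`-th term is `k` minus the number of tests among `y₀, …, yᵢ` whose
outcome differs from the path leading to branch `i`. It therefore equals `k` exactly at the branch
that fires and lies in `{0, …, k - 1}` for every other branch, so `p(y) - f(y)` is a sum of `k`
terms, each of absolute value at most `γ / k`.
-/

open scoped Classical

open Finset

namespace DecisionList

variable (y : ℕ → Bool) (k : ℕ) {i : ℕ}

def falseCount (i : ℕ) : ℕ := #{j ∈ range i | y j = false}

/-- The argument of `h` in the `i`-th term of the polynomial; `i = k` is the default branch. -/
def branchArg (i : ℕ) : ℕ :=
  if i < k then falseCount y i + (if y i then 1 else 0) + (k - (i + 1)) else falseCount y k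

def firingBranch : ℕ := if hex : ∃ i, i < k ∧ y i = true then Nat.find hex else k

variable {y k}

lemma falseCount_le : falseCount y i ≤ i := by
  simpa [falseCount] using card_filter_le (range i) fun j => y j = false

lemma falseCount_eq_self_iff : falseCount y i = i ↔ ∀ j < i, y j = false := by
  simpa [falseCount] using card_filter_eq_iff (s := range i) (p := fun j => y j = false)

lemma cast_falseCount :
    (falseCount y i : ℝ) = ∑ j ∈ range i, (1 - if y j then (1 : ℝ) else 0) := by
  rw [falseCount, natCast_card_filter]
  exact sum_congr rfl fun j _ => by cases y j <;> simp

lemma cast_branchArg_of_lt (hik : i < k) :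
    (branchArg y k i : ℝ) = ∑ j ∈ range i, (1 - if y j then (1 : ℝ) else 0)
      + (if y i then (1 : ℝ) else 0) + ((k - (i + 1) : ℕ) : ℝ) := by
  rw [branchArg, if_pos hik]
  push_cast [cast_falseCount]
  cases y i <;> simp

lemma sum_range_succ_branchArg (b : ℕ → ℝ) (g : ℝ → ℝ) :
    ∑ i ∈ range (k + 1), b i * g (branchArg y k i) =
      ∑ i ∈ range k, b i * g (∑ j ∈ range i, (1 - if y j then (1 : ℝ) else 0)
        + (if y i then (1 : ℝ) else 0) + ((k - (i + 1) : ℕ) : ℝ))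
      + b k * g (∑ j ∈ range k, (1 - if y j then (1 : ℝ) else 0)) := by
  rw [sum_range_succ, branchArg, if_neg (lt_irrefl k), cast_falseCount]
  congr 1
  exact sum_congr rfl fun i hi => by rw [cast_branchArg_of_lt (mem_range.1 hi)]

lemma branchArg_le : branchArg y k i ≤ k := by
  have := falseCount_le (y := y) (i := i)
  have := falseCount_le (y := y) (i := k)
  unfold branchArg
  split_ifs <;> omega

lemma branchArg_eq_iff (hik : i ≤ k) :
    branchArg y k i = k ↔ (i < k → y i = true) ∧ ∀ j < i, y j = false := by
  rw [← falseCount_eq_self_iff]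
  have := falseCount_le (y := y) (i := i)
  unfold branchArg
  split_ifs with hlt hyi
  · simp [hyi, hlt]; omega
  · simp [hyi, hlt]; omega
  · obtain rfl : i = k := by omega
    simp

lemma firingBranch_spec :
    firingBranch y k ≤ k ∧ (firingBranch y k < k → y (firingBranch y k) = true) ∧
      ∀ j < firingBranch y k, y j = false := by
  unfold firingBranch
  split_ifs with hex
  · obtain ⟨hlt, hy⟩ := Nat.find_spec hex
    refine ⟨hlt.le, fun _ => hy, fun j hj => ?_⟩
    simpa [hj.trans hlt] using Nat.find_min hex hj
  · push Not at hex
    exact ⟨le_rfl, fun h => absurd h (lt_irrefl k), fun j hj => by simpa using hex j hj⟩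

lemma branchArg_firingBranch : branchArg y k (firingBranch y k) = k :=
  (branchArg_eq_iff firingBranch_spec.1).2 firingBranch_spec.2

lemma eq_firingBranch_of_branchArg_eq (hik : i ≤ k) (h : branchArg y k i = k) :
    i = firingBranch y k := by
  obtain ⟨hfire, hbefore⟩ := (branchArg_eq_iff hik).1 h
  obtain ⟨hle, hfire', hbefore'⟩ := firingBranch_spec (y := y) (k := k)
  rcases lt_trichotomy i (firingBranch y k) with hlt | heq | hgt
  · simpa [hbefore' i hlt] using hfire (hlt.trans_le hle)
  · exact heq
  · simpa [hbefore _ hgt] using hfire' (hgt.trans_le hik)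

lemma branchArg_lt_of_ne (hik : i ≤ k) (hne : i ≠ firingBranch y k) : branchArg y k i < k :=
  branchArg_le.lt_of_ne fun h => hne (eq_firingBranch_of_branchArg_eq hik h)

end DecisionList

lemma Finset.abs_sum_sub_le_of_abs_le {ι : Type*} [DecidableEq ι] {s : Finset ι} {i₀ : ι}
    (hi₀ : i₀ ∈ s) {f : ι → ℝ} {ε : ℝ} (hf : ∀ i ∈ s, i ≠ i₀ → |f i| ≤ ε) :
    |∑ i ∈ s, f i - f i₀| ≤ (#s - 1 : ℕ) * ε := by
  rw [← sum_erase_add s f hi₀, add_sub_cancel_right, ← card_erase_of_mem hi₀]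
  refine (abs_sum_le_sum_abs _ _).trans ?_
  simpa using sum_le_card_nsmul _ _ ε fun i hi => hf i (mem_of_mem_erase hi) (ne_of_mem_erase hi)

theorem decision_list_approx_general (k : ℕ) (hk : 1 ≤ k)
    (γ : ℝ) (h : Polynomial ℝ)
    (hk1 : h.eval (k : ℝ) = 1)
    (hsmall : ∀ s : ℕ, s < k → |h.eval (s : ℝ)| ≤ γ / k)
    (b : ℕ → ℝ) (hb : ∀ i, b i = 0 ∨ b i = 1) (y : ℕ → Bool) :
    |(∑ i ∈ Finset.range k,
        b i * h.eval ((∑ j ∈ Finset.range i, (1 - (if y j then (1 : ℝ) else 0)))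
          + (if y i then (1 : ℝ) else 0) + ((k - (i + 1) : ℕ) : ℝ))
      + b k * h.eval (∑ j ∈ Finset.range k, (1 - (if y j then (1 : ℝ) else 0))))
      - (if hex : ∃ i, i < k ∧ y i = true then b (Nat.find hex) else b k)| ≤ γ := by
  open DecisionList in
  set i₀ := firingBranch y k
  have hfire : b i₀ * h.eval (branchArg y k i₀ : ℝ) = b i₀ := by
    rw [branchArg_firingBranch, hk1, mul_one]
  have hrest (i) (hi : i ∈ range (k + 1)) (hne : i ≠ i₀) :
      |b i * h.eval (branchArg y k i : ℝ)| ≤ γ / k := by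
    rw [abs_mul]
    refine mul_le_of_le_one_left (abs_nonneg _) ?_ |>.trans ?_
    · rcases hb i with hbi | hbi <;> simp [hbi]
    · exact hsmall _ (branchArg_lt_of_ne (mem_range_succ_iff.1 hi) hne)
  calc _ = |∑ i ∈ range (k + 1), b i * h.eval (branchArg y k i : ℝ)
          - b i₀ * h.eval (branchArg y k i₀ : ℝ)| := by
        rw [sum_range_succ_branchArg b h.eval, hfire]
        congr 2
        exact (apply_dite b _ _ _).symm
    _ ≤ (#(range (k + 1)) - 1 : ℕ) * (γ / k) :=
      abs_sum_sub_le_of_abs_le (mem_range_succ_iff.2 firingBranch_spec.1) hrest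
    _ = γ := by simp [mul_div_cancel₀ γ (show (k : ℝ) ≠ 0 from Nat.cast_ne_zero.2 (by omega))]

/-- If `h(k) = 1` and `|h(s)| ≤ γ/k` for `s ∈ {0,…,k-1}`, then the polynomial
`p(y) = ∑_{i<k} b_i h((∑_{j<i}(1-y_j)) + y_i + (k-i-1)) + b_k h(∑_{j<k}(1-y_j))`
approximates the length-`k` decision list with outputs `b₀,…,b_k` to within `γ`
on every Boolean input. -/
theorem decision_list_approx (m k : ℕ) (hk : 1 ≤ k) (hkm : k ≤ m)
    (γ : ℝ) (hγ : 0 < γ) (h : Polynomial ℝ)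
    (hk1 : h.eval (k : ℝ) = 1)
    (hsmall : ∀ s : ℕ, s < k → |h.eval (s : ℝ)| ≤ γ / k)
    (b : ℕ → ℝ) (hb : ∀ i, b i = 0 ∨ b i = 1) (y : ℕ → Bool) :
    |(∑ i ∈ Finset.range k,
        b i * h.eval ((∑ j ∈ Finset.range i, (1 - (if y j then (1 : ℝ) else 0)))
          + (if y i then (1 : ℝ) else 0) + ((k - (i + 1) : ℕ) : ℝ))
      + b k * h.eval (∑ j ∈ Finset.range k, (1 - (if y j then (1 : ℝ) else 0))))
      - (if hex : ∃ i, i < k ∧ y i = true then b (Nat.find hex) else b k)| ≤ γ :=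
  decision_list_approx_general k hk γ h hk1 hsmall b hb y
end

section
/- Let f : X^n → ℝ^N be a function such that for all pairs of databases D, D' ∈ X^n differing in one coordinate, ‖f(D) − f(D')‖₁ ≤ Δ. Then the mechanism A(D) = f(D) + Z, where Z has N i.i.d. Laplace(Δ/ε) coordinates, is ε-differentially private: for all such adjacent D, D' and all measurable S ⊆ ℝ^N, P(A(D) ∈ S) ≤ e^{ε}·P(A(D') ∈ S). -/
open MeasureTheory

/-- The Laplace distribution with scale `σ`: density `(1/(2σ))·exp(-|x|/σ)` w.r.t. Lebesgue. -/
noncomputable def laplaceMeasure (σ : ℝ) : Measure ℝ :=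
  volume.withDensity (fun x => ENNReal.ofReal ((1 / (2 * σ)) * Real.exp (-|x| / σ)))

/-! The density of `f D + Z` at `y` is `∏ i, p (y i - f D i)`, with `p` the Laplace(σ)
density. By the triangle inequality `p (t - a) ≤ exp (|a - b| / σ) * p (t - b)`, so the
density of the mechanism at `D` is pointwise at most `exp (‖f D - f D'‖₁ / σ) ≤ exp ε` times
its density at `D'`, and the inequality of measures follows by integrating over `S`. -/

open scoped ENNReal

namespace MeasureTheory

theorem lintegral_fin_nat_prod_eq_prod {n : ℕ} {α : Fin n → Type*}
    [∀ i, MeasurableSpace (α i)]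
    (μ : ∀ i, Measure (α i)) [∀ i, SigmaFinite (μ i)] {g : ∀ i, α i → ℝ≥0∞}
    (hg : ∀ i, Measurable (g i)) :
    ∫⁻ x, ∏ i, g i (x i) ∂Measure.pi μ = ∏ i, ∫⁻ t, g i t ∂μ i := by
  induction n with
  | zero => simp
  | succ n ih =>
    have htail : Measurable fun y : ∀ j : Fin n, α (Fin.succAbove 0 j) =>
        ∏ j, g (Fin.succAbove 0 j) (y j) :=
      Finset.measurable_prod _ fun j _ => (hg _).comp (measurable_pi_apply j)
    calc ∫⁻ x, ∏ i, g i (x i) ∂Measure.pi μ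
        = ∫⁻ x, (fun p : α 0 × ∀ j, α (Fin.succAbove 0 j) => g 0 p.1 * ∏ j, g _ (p.2 j))
            (MeasurableEquiv.piFinSuccAbove α 0 x) ∂Measure.pi μ := by
          simp only [Fin.prod_univ_succAbove _ 0]
          rfl
      _ = ∫⁻ p, g 0 p.1 * ∏ j, g _ (p.2 j)
            ∂(μ 0).prod (Measure.pi fun j => μ (Fin.succAbove 0 j)) :=
          (measurePreserving_piFinSuccAbove μ 0).lintegral_comp_emb
            (MeasurableEquiv.piFinSuccAbove α 0).measurableEmbedding
            (fun p : α 0 × ∀ j, α (Fin.succAbove 0 j) => g 0 p.1 * ∏ j, g _ (p.2 j))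
      _ = ∏ i, ∫⁻ t, g i t ∂μ i := by
          rw [lintegral_prod_mul (hg 0).aemeasurable htail.aemeasurable,
            ih _ fun j => hg _, Fin.prod_univ_succAbove _ 0]

theorem Measure.pi_withDensity_fin {n : ℕ} {α : Fin n → Type*} [∀ i, MeasurableSpace (α i)]
    (μ : ∀ i, Measure (α i)) [∀ i, SigmaFinite (μ i)] {g : ∀ i, α i → ℝ≥0∞}
    (hg : ∀ i, Measurable (g i)) [∀ i, SigmaFinite ((μ i).withDensity (g i))] :
    Measure.pi (fun i => (μ i).withDensity (g i))
      = (Measure.pi μ).withDensity fun x => ∏ i, g i (x i) := by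
  refine (Measure.pi_eq (μ := fun i => (μ i).withDensity (g i)) fun s hs => ?_)
  have hbox : (Set.univ.pi s).indicator (fun x => ∏ i, g i (x i))
      = fun x => ∏ i, (s i).indicator (g i) (x i) := by
    ext x
    classical
    simp only [Set.indicator_apply, Set.mem_univ_pi, Fintype.prod_ite_zero]
    congr
  rw [withDensity_apply _ (.univ_pi hs), ← lintegral_indicator (.univ_pi hs), hbox,
    lintegral_fin_nat_prod_eq_prod μ fun i => (hg i).indicator (hs i)]
  refine Finset.prod_congr rfl fun i _ => ?_
  rw [lintegral_indicator (hs i), withDensity_apply _ (hs i)]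

theorem MeasurePreserving.map_withDensity_comp {α β : Type*} [MeasurableSpace α]
    [MeasurableSpace β] {μ : Measure α} {ν : Measure β} {e : α ≃ᵐ β}
    (he : MeasurePreserving e μ ν) (g : β → ℝ≥0∞) :
    (μ.withDensity (g ∘ e)).map e = ν.withDensity g := by
  ext s hs
  rw [Measure.map_apply e.measurable hs, withDensity_apply _ (hs.preimage e.measurable),
    withDensity_apply _ hs]
  exact he.setLIntegral_comp_preimage_emb e.measurableEmbedding g s

theorem Measure.map_add_left_withDensity {G : Type*} [MeasurableSpace G] [AddGroup G]
    [MeasurableAdd G] (μ : Measure G) [μ.IsAddLeftInvariant] (c : G) (g : G → ℝ≥0∞) :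
    (μ.withDensity g).map (c + ·) = μ.withDensity fun y => g (-c + y) := by
  simpa [Function.comp_def] using (measurePreserving_add_left μ c).map_withDensity_comp
    (e := MeasurableEquiv.addLeft c) fun y => g (-c + y)

end MeasureTheory

noncomputable def laplacePDFReal (σ x : ℝ) : ℝ :=
  1 / (2 * σ) * Real.exp (-|x| / σ)

noncomputable def laplacePDF (σ x : ℝ) : ℝ≥0∞ :=
  ENNReal.ofReal (laplacePDFReal σ x)

theorem measurable_laplacePDF (σ : ℝ) : Measurable (laplacePDF σ) := by
  unfold laplacePDF laplacePDFReal
  fun_prop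

instance (σ : ℝ) : SigmaFinite (laplaceMeasure σ) := by
  unfold laplaceMeasure
  infer_instance

section Laplace

variable {σ : ℝ}

theorem laplacePDFReal_sub_le (hσ : 0 ≤ σ) (x a b : ℝ) :
    laplacePDFReal σ (x - a) ≤ Real.exp (|a - b| / σ) * laplacePDFReal σ (x - b) := by
  unfold laplacePDFReal
  rw [mul_left_comm, ← Real.exp_add, ← add_div]
  gcongr
  linarith [abs_sub_le x a b]

theorem laplacePDF_sub_le (hσ : 0 ≤ σ) (x a b : ℝ) :
    laplacePDF σ (x - a) ≤ ENNReal.ofReal (Real.exp (|a - b| / σ)) * laplacePDF σ (x - b) := by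
  rw [laplacePDF, laplacePDF, ← ENNReal.ofReal_mul (Real.exp_nonneg _)]
  exact ENNReal.ofReal_le_ofReal (laplacePDFReal_sub_le hσ x a b)

theorem pi_laplaceMeasure_eq_withDensity (d : ℕ) :
    Measure.pi (fun _ : Fin d => laplaceMeasure σ)
      = volume.withDensity fun x => ∏ i, laplacePDF σ (x i) :=
  Measure.pi_withDensity_fin _ fun _ => measurable_laplacePDF σ

theorem map_add_pi_laplaceMeasure {d : ℕ} (c : Fin d → ℝ) :
    (Measure.pi fun _ : Fin d => laplaceMeasure σ).map (c + ·)
      = volume.withDensity fun y => ∏ i, laplacePDF σ (y i - c i) := by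
  rw [pi_laplaceMeasure_eq_withDensity, Measure.map_add_left_withDensity]
  simp only [Pi.add_apply, Pi.neg_apply, neg_add_eq_sub]

theorem map_add_pi_laplaceMeasure_le (hσ : 0 ≤ σ) {d : ℕ} (a b : Fin d → ℝ) :
    (Measure.pi fun _ : Fin d => laplaceMeasure σ).map (a + ·)
      ≤ ENNReal.ofReal (Real.exp ((∑ i, |a i - b i|) / σ))
        • (Measure.pi fun _ : Fin d => laplaceMeasure σ).map (b + ·) := by
  have hprod : ∏ i, ENNReal.ofReal (Real.exp (|a i - b i| / σ))
      = ENNReal.ofReal (Real.exp ((∑ i, |a i - b i|) / σ)) := by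
    rw [← ENNReal.ofReal_prod_of_nonneg fun _ _ => Real.exp_nonneg _, ← Real.exp_sum,
      Finset.sum_div]
  have hmeas : Measurable fun y : Fin d → ℝ => ∏ i, laplacePDF σ (y i - b i) :=
    Finset.measurable_prod _ fun i _ =>
      (measurable_laplacePDF σ).comp ((measurable_pi_apply i).sub_const _)
  rw [map_add_pi_laplaceMeasure, map_add_pi_laplaceMeasure, ← withDensity_smul _ hmeas]
  refine withDensity_mono (.of_forall fun y => ?_)
  calc ∏ i, laplacePDF σ (y i - a i)
      ≤ ∏ i, ENNReal.ofReal (Real.exp (|a i - b i| / σ)) * laplacePDF σ (y i - b i) :=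
        Finset.prod_le_prod' fun i _ => laplacePDF_sub_le hσ _ _ _
    _ = ENNReal.ofReal (Real.exp ((∑ i, |a i - b i|) / σ))
          * ∏ i, laplacePDF σ (y i - b i) := by
        rw [Finset.prod_mul_distrib, hprod]

end Laplace

theorem laplace_mechanism_private_general {X : Type*} (n N : ℕ)
    (Δ ε : ℝ) (hΔ : 0 < Δ) (hε : 0 < ε)
    (f : (Fin n → X) → (Fin N → ℝ))
    (hsens : ∀ D D' : Fin n → X, (∃ i, ∀ j, j ≠ i → D j = D' j) →
      ∑ i, |f D i - f D' i| ≤ Δ) :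
    ∀ D D' : Fin n → X, (∃ i, ∀ j, j ≠ i → D j = D' j) →
      ∀ S : Set (Fin N → ℝ), MeasurableSet S →
        (Measure.map (fun z => f D + z)
            (Measure.pi (fun _ : Fin N => laplaceMeasure (Δ / ε)))) S
          ≤ ENNReal.ofReal (Real.exp ε) *
            (Measure.map (fun z => f D' + z)
              (Measure.pi (fun _ : Fin N => laplaceMeasure (Δ / ε)))) S := by
  intro D D' hadj S _
  have hσ : 0 < Δ / ε := div_pos hΔ hε
  have hratio : (∑ i, |f D i - f D' i|) / (Δ / ε) ≤ ε := by
    rw [div_le_iff₀ hσ, mul_div_cancel₀ _ hε.ne']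
    exact hsens D D' hadj
  calc _ ≤ (ENNReal.ofReal (Real.exp ((∑ i, |f D i - f D' i|) / (Δ / ε)))
          • (Measure.pi fun _ : Fin N => laplaceMeasure (Δ / ε)).map (f D' + ·)) S :=
        Measure.le_iff'.1 (map_add_pi_laplaceMeasure_le hσ.le _ _) S
    _ ≤ _ := by
        rw [Measure.smul_apply, smul_eq_mul]
        gcongr

/-- The Laplace mechanism: if `f` has `L₁`-sensitivity `Δ` over databases differing in one
coordinate, then adding i.i.d. Laplace(Δ/ε) noise to each coordinate of `f` is
`ε`-differentially private. -/
theorem laplace_mechanism_private {X : Type*} [Fintype X] (n N : ℕ)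
    (Δ ε : ℝ) (hΔ : 0 < Δ) (hε : 0 < ε)
    (f : (Fin n → X) → (Fin N → ℝ))
    (hsens : ∀ D D' : Fin n → X, (∃ i, ∀ j, j ≠ i → D j = D' j) →
      ∑ i, |f D i - f D' i| ≤ Δ) :
    ∀ D D' : Fin n → X, (∃ i, ∀ j, j ≠ i → D j = D' j) →
      ∀ S : Set (Fin N → ℝ), MeasurableSet S →
        (Measure.map (fun z => f D + z)
            (Measure.pi (fun _ : Fin N => laplaceMeasure (Δ / ε)))) S
          ≤ ENNReal.ofReal (Real.exp ε) *
            (Measure.map (fun z => f D' + z)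
              (Measure.pi (fun _ : Fin N => laplaceMeasure (Δ / ε)))) S :=
  laplace_mechanism_private_general n N Δ ε hΔ hε f hsens
end
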